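/- Let μ, ω ∈ ℝ with ω > 0 and set λ = μ + iω. Let g₂₀, g₁₁, g₀₂, g₃₀, g₂₁, g₁₂, g₀₃ ∈ ℂ. Define h₂₀ = g₂₀/λ, h₁₁ = g₁₁/conj(λ), h₀₂ = g₀₂/(2·conj(λ) - λ), and define the first Lyapunov quantity c₁ = ((2λ + conj(λ))/(2 λ conj(λ))) g₂₀ g₁₁ + |g₁₁|²/λ + |g₀₂|²/(2(2λ - conj(λ))) + g₂₁/2. Define G : ℂ → ℂ by G(z) = λ z + (g₂₀/2) z² + g₁₁ z z̄ + (g₀₂/2) z̄² + (g₃₀/6) z³ + (g₂₁/2) z² z̄ + (g₁₂/2) z z̄² + (g₀₃/6) z̄³, and N : ℂ → ℂ by N(w) = λ w + c₁ w² w̄. Then there exist h₃₀, h₁₂, h₀₃ ∈ ℂ such that, with φ(w) = w + (h₂₀/2) w² + h₁₁ w w̄ + (h₀₂/2) w̄² + (h₃₀/6) w³ + (h₁₂/2) w w̄² + (h₀₃/6) w̄³, there exists C > 0 such that for all w ∈ ℂ with |w| ≤ 1, |(1 + h₂₀ w + h₁₁ w̄ + (h₃₀/2) w² + (h₁₂/2)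 w̄²)·N(w) + (h₁₁ w + h₀₂ w̄ + h₁₂ w w̄ + (h₀₃/2) w̄²)·conj(N(w)) - G(φ(w))| ≤ C |w|⁴. (That is, with the cubic coefficient of w²w̄ in the transformation set to zero, the near-identity change of coordinates z = φ(w) conjugates the cubic planar field G to the Poincaré normal form w' = λw + c₁ w² w̄ up to fourth-order errors, where c₁ is given by Bautin's formula.) -/

import Mathlib

/-!
Write `φ = w + q + k` with `q` quadratic and `k` cubic in `(w, w̄)`, and `G = λ z + G₂ + G₃`.
Expanding `Dφ · N - G ∘ φ` by degree, the linear terms cancel, the quadratic terms vanish by the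
homological equation that defines `h₂₀, h₁₁, h₀₂`, and the cubic terms vanish once `h₃₀, h₁₂, h₀₃`
solve the cubic homological equation; the `w²w̄` coefficient is resonant and cannot be removed,
and requiring it to vanish with `h₂₁ = 0` is exactly Bautin's formula for `c₁`. What is left is a
sum of products of factors vanishing to orders adding up to at least four, which is `O(|w|⁴)` on
the unit disc.
-/

open Asymptotics Filter Metric

section Order

variable {α 𝕜 : Type*} [NormedField 𝕜] {l : Filter α} {u f g : α → 𝕜} {m n : ℕ}

theorem Asymptotics.IsBigO.mul_pow (hf : f =O[l] fun x => u x ^ m)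
    (hg : g =O[l] fun x => u x ^ n) : (fun x => f x * g x) =O[l] fun x => u x ^ (m + n) := by
  simpa only [pow_add] using hf.mul hg

theorem Asymptotics.IsBigO.star_left {E : Type*} [SeminormedAddCommGroup E] [StarAddMonoid E]
    [NormedStarGroup E] {f : α → E} (hf : f =O[l] g) :
    (fun x => star (f x)) =O[l] g :=
  isBigO_norm_left.mp <| by simpa only [norm_star] using hf.norm_left

theorem isBigO_pow_pow_of_le_closedBall (h : m ≤ n) :
    (fun x : 𝕜 => x ^ n) =O[𝓟 (closedBall 0 1)] fun x => x ^ m :=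
  IsBigO.of_bound' <| eventually_principal.2 fun x hx => by
    simpa only [norm_pow] using
      pow_le_pow_of_le_one (norm_nonneg x) (mem_closedBall_zero_iff.1 hx) h

end Order

/-- Forms in `(z, z̄)` with Taylor-coefficient normalisation: the coefficient of `z^j z̄^k` is
`a_jk / (j! k!)`. -/
noncomputable def quadForm (a b c z : ℂ) : ℂ := a / 2 * z ^ 2 + b * z * star z + c / 2 * star z ^ 2

def quadPolar (a b c w z : ℂ) : ℂ :=
  a * w * z + b * (w * star z + star w * z) + c * star w * star z

noncomputable def cubicForm (a b c d z : ℂ) : ℂ :=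
  a / 6 * z ^ 3 + b / 2 * z ^ 2 * star z + c / 2 * z * star z ^ 2 + d / 6 * star z ^ 3

theorem quadForm_add (a b c w z : ℂ) :
    quadForm a b c (w + z) = quadForm a b c w + quadPolar a b c w z + quadForm a b c z := by
  simp only [quadForm, quadPolar, star_add]; ring

theorem quadPolar_add_right (a b c w z z' : ℂ) :
    quadPolar a b c w (z + z') = quadPolar a b c w z + quadPolar a b c w z' := by
  simp only [quadPolar, star_add]; ring

theorem cubicForm_sub (a b c d z w : ℂ) :
    cubicForm a b c d z - cubicForm a b c d w =
      (z - w) * (a / 6 * (z * z + z * w + w * w) + b / 2 * (z * star z + w * star z)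
          + c / 2 * (star z * star z))
        + star (z - w) * (b / 2 * (w * w) + c / 2 * (w * star z + w * star w)
          + d / 6 * (star z * star z + star z * star w + star w * star w)) := by
  simp only [cubicForm, star_sub]; ring

section FormOrder

variable {α : Type*} {l : Filter α} {u f g : α → ℂ} {m n : ℕ} (a b c d : ℂ)

theorem isBigO_quadForm (hf : f =O[l] fun x => u x ^ n) :
    (fun x => quadForm a b c (f x)) =O[l] fun x => u x ^ (n + n) := by
  have hf' := hf.star_left
  refine ((hf.mul_pow hf).const_mul_left (a / 2) |>.add ((hf.mul_pow hf').const_mul_left b)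
    |>.add ((hf'.mul_pow hf').const_mul_left (c / 2))).congr_left fun x => ?_
  simp only [quadForm]; ring

theorem isBigO_quadPolar (hf : f =O[l] fun x => u x ^ m) (hg : g =O[l] fun x => u x ^ n) :
    (fun x => quadPolar a b c (f x) (g x)) =O[l] fun x => u x ^ (m + n) := by
  have hf' := hf.star_left
  have hg' := hg.star_left
  refine ((hf.mul_pow hg).const_mul_left a
    |>.add ((hf.mul_pow hg' |>.add (hf'.mul_pow hg)).const_mul_left b)
    |>.add ((hf'.mul_pow hg').const_mul_left c)).congr_left fun x => ?_
  simp only [quadPolar]; ring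

theorem isBigO_cubicForm (hf : f =O[l] fun x => u x ^ n) :
    (fun x => cubicForm a b c d (f x)) =O[l] fun x => u x ^ (n + n + n) := by
  have hf' := hf.star_left
  refine ((hf.mul_pow hf |>.mul_pow hf).const_mul_left (a / 6)
    |>.add ((hf.mul_pow hf |>.mul_pow hf').const_mul_left (b / 2))
    |>.add ((hf.mul_pow hf' |>.mul_pow hf').const_mul_left (c / 2))
    |>.add ((hf'.mul_pow hf' |>.mul_pow hf').const_mul_left (d / 6))).congr_left fun x => ?_
  simp only [cubicForm]; ring

theorem isBigO_cubicForm_sub (hf : f =O[l] fun x => u x ^ 1) (hg : g =O[l] fun x => u x ^ 1)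
    (hfg : (fun x => f x - g x) =O[l] fun x => u x ^ 2) :
    (fun x => cubicForm a b c d (f x) - cubicForm a b c d (g x)) =O[l] fun x => u x ^ 4 := by
  have hf' := hf.star_left
  have hg' := hg.star_left
  have hP := (hf.mul_pow hf |>.add (hf.mul_pow hg) |>.add (hg.mul_pow hg)).const_mul_left (a / 6)
    |>.add ((hf.mul_pow hf' |>.add (hg.mul_pow hf')).const_mul_left (b / 2))
    |>.add ((hf'.mul_pow hf').const_mul_left (c / 2))
  have hQ := (hg.mul_pow hg).const_mul_left (b / 2)
    |>.add ((hg.mul_pow hf' |>.add (hg.mul_pow hg')).const_mul_left (c / 2))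
    |>.add ((hf'.mul_pow hf' |>.add (hf'.mul_pow hg') |>.add (hg'.mul_pow hg')).const_mul_left
      (d / 6))
  exact ((hfg.mul_pow hP).add (hfg.star_left.mul_pow hQ)).congr_left fun x =>
    (cubicForm_sub ..).symm

end FormOrder

section Homological

variable {lam c₁ g20 g11 g02 g30 g21 g12 g03 h20 h11 h02 h30 h12 h03 : ℂ}

theorem quadForm_homological (e20 : g20 = lam * h20) (e11 : g11 = star lam * h11)
    (e02 : g02 = (2 * star lam - lam) * h02) (w : ℂ) :
    lam * w * (h20 * w + h11 * star w) + star lam * star w * (h11 * w + h02 * star w)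
      - lam * quadForm h20 h11 h02 w = quadForm g20 g11 g02 w := by
  subst e20 e11 e02
  simp only [quadForm]
  ring

theorem cubicForm_homological
    (e30 : 2 * lam * h30 = g30 + 3 * g20 * h20 + 3 * g11 * star h02)
    (e12 : 2 * star lam * h12
      = g12 + g20 * h02 + g11 * star h20 + 2 * g11 * h11 + 2 * g02 * star h11)
    (e03 : (3 * star lam - lam) * h03 = g03 + 3 * g11 * h02 + 3 * g02 * star h20)
    (ec : 2 * c₁ = g21 + 2 * g20 * h11 + 2 * g11 * star h11 + g11 * h20 + g02 * star h02)
    (w : ℂ) :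
    c₁ * w ^ 2 * star w + lam * w * (h30 / 2 * w ^ 2 + h12 / 2 * star w ^ 2)
        + star lam * star w * (h12 * w * star w + h03 / 2 * star w ^ 2)
        - lam * cubicForm h30 0 h12 h03 w
      = quadPolar g20 g11 g02 w (quadForm h20 h11 h02 w) + cubicForm g30 g21 g12 g03 w := by
  simp only [quadPolar, quadForm, cubicForm, star_add, star_mul, star_div₀, star_pow, star_ofNat,
    star_star]
  linear_combination w ^ 3 / 6 * e30 + w * star w ^ 2 / 2 * e12 + star w ^ 3 / 6 * e03
    + w ^ 2 * star w / 2 * ec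

end Homological

theorem isBigO_normalForm_residual
    {lam c₁ g20 g11 g02 g30 g21 g12 g03 h20 h11 h02 h30 h12 h03 : ℂ} {G N : ℂ → ℂ}
    (hG : ∀ z, G z = lam * z + quadForm g20 g11 g02 z + cubicForm g30 g21 g12 g03 z)
    (hN : ∀ w, N w = lam * w + c₁ * w ^ 2 * star w)
    (e20 : g20 = lam * h20) (e11 : g11 = star lam * h11)
    (e02 : g02 = (2 * star lam - lam) * h02)
    (e30 : 2 * lam * h30 = g30 + 3 * g20 * h20 + 3 * g11 * star h02)
    (e12 : 2 * star lam * h12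
      = g12 + g20 * h02 + g11 * star h20 + 2 * g11 * h11 + 2 * g02 * star h11)
    (e03 : (3 * star lam - lam) * h03 = g03 + 3 * g11 * h02 + 3 * g02 * star h20)
    (ec : 2 * c₁ = g21 + 2 * g20 * h11 + 2 * g11 * star h11 + g11 * h20 + g02 * star h02) :
    (fun w => (1 + h20 * w + h11 * star w + h30 / 2 * w ^ 2 + h12 / 2 * star w ^ 2) * N w
        + (h11 * w + h02 * star w + h12 * w * star w + h03 / 2 * star w ^ 2) * star (N w)
        - G (w + (quadForm h20 h11 h02 w + cubicForm h30 0 h12 h03 w)))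
      =O[𝓟 (closedBall 0 1)] fun w => w ^ 4 := by
  have hw : (fun w : ℂ => w) =O[𝓟 (closedBall 0 1)] fun w => w ^ 1 := by
    simpa only [pow_one] using isBigO_refl _ _
  have hw' := hw.star_left
  have hq := isBigO_quadForm h20 h11 h02 hw
  have hk := isBigO_cubicForm h30 0 h12 h03 hw
  have hε := hq.add (hk.trans (isBigO_pow_pow_of_le_closedBall (by norm_num)))
  have hφ := hw.add (hε.trans (isBigO_pow_pow_of_le_closedBall (by norm_num)))
  have hquad (a b : ℂ) : (fun w : ℂ => a / 2 * w ^ 2 + b / 2 * star w ^ 2)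
      =O[𝓟 (closedBall 0 1)] fun w => w ^ 1 :=
    (isBigO_quadForm a 0 b hw).trans (isBigO_pow_pow_of_le_closedBall (by norm_num))
      |>.congr_left fun w => by simp only [quadForm]; ring
  have hN₃ : (fun w : ℂ => c₁ * w ^ 2 * star w) =O[𝓟 (closedBall 0 1)] fun w => w ^ 3 :=
    ((hw.mul_pow hw).mul_pow hw').const_mul_left c₁ |>.congr_left fun w => by ring
  have hwφ := (hw.const_mul_left h20 |>.add (hw'.const_mul_left h11)
    |>.add (hquad h30 h12)).mul_pow hN₃
  have hw'φ := (hw.const_mul_left h11 |>.add (hw'.const_mul_left h02)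
    |>.add ((hw.mul_pow hw').const_mul_left h12
      |>.trans (isBigO_pow_pow_of_le_closedBall (by norm_num)) |>.add (hquad 0 h03))).mul_pow
    hN₃.star_left
  have hG₂ := (isBigO_quadPolar g20 g11 g02 hw hk).add (isBigO_quadForm g20 g11 g02 hε)
  have hG₃ := isBigO_cubicForm_sub g30 g21 g12 g03 hφ hw (hε.congr_left fun w => by ring)
  -- After the homological equations remove degrees 2 and 3, the residual is
  -- `(∂φ - 1)(N - λw) + ∂̄φ · conj (N - λw) - (G₂(φ) - G₂(w) - B₂(w, q)) - (G₃(φ) - G₃(w))`.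
  refine (hwφ.add hw'φ |>.sub hG₂ |>.sub hG₃).congr_left fun w => ?_
  rw [hG, hN, quadForm_add g20 g11 g02 w, quadPolar_add_right]
  simp only [star_add, star_mul, star_pow]
  linear_combination -quadForm_homological e20 e11 e02 w - cubicForm_homological e30 e12 e03 ec w

theorem two_mul_bautin_eq {lam g20 g11 g02 g21 : ℂ} (hlam : lam ≠ 0)
    (hlam' : 2 * lam - star lam ≠ 0) :
    2 * ((2 * lam + star lam) / (2 * lam * star lam) * g20 * g11 + g11 * star g11 / lam
        + g02 * star g02 / (2 * (2 * lam - star lam)) + g21 / 2)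
      = g21 + 2 * g20 * (g11 / star lam) + 2 * g11 * star (g11 / star lam)
        + g11 * (g20 / lam) + g02 * star (g02 / (2 * star lam - lam)) := by
  have hlam_star : star lam ≠ 0 := star_ne_zero.mpr hlam
  have hlam'_star : star (2 * lam - star lam) ≠ 0 := star_ne_zero.mpr hlam'
  simp only [star_sub, star_mul, star_ofNat, star_star] at hlam'_star
  simp only [star_div₀, star_sub, star_mul, star_ofNat, star_star]
  field_simp
  ring

/-- with the quadratic coefficients `h₂₀ = g₂₀/λ`, `h₁₁ = g₁₁/λ̄`,
`h₀₂ = g₀₂/(2λ̄-λ)`, the cubic coefficient of `w²w̄` set to zero, and Bautin's first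
Lyapunov quantity `c₁`, there exist cubic coefficients `h₃₀, h₁₂, h₀₃` such that the
near-identity transformation `z = φ(w)` conjugates the cubic planar field `G` to the
Poincaré normal form `N(w) = λw + c₁ w²w̄` up to fourth-order errors. -/
theorem hopf_poincare_normal_form_cubic
    (μ ω : ℝ) (hω : 0 < ω) (lam : ℂ) (hlam : lam = μ + ω * Complex.I)
    (g20 g11 g02 g30 g21 g12 g03 h20 h11 h02 c₁ : ℂ)
    (hh20 : h20 = g20 / lam) (hh11 : h11 = g11 / star lam)
    (hh02 : h02 = g02 / (2 * star lam - lam))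
    (hc₁ : c₁ = (2 * lam + star lam) / (2 * lam * star lam) * g20 * g11
      + g11 * star g11 / lam + g02 * star g02 / (2 * (2 * lam - star lam)) + g21 / 2)
    (G N : ℂ → ℂ)
    (hG : ∀ z : ℂ, G z = lam * z + g20 / 2 * z ^ 2 + g11 * z * star z + g02 / 2 * (star z) ^ 2
      + g30 / 6 * z ^ 3 + g21 / 2 * z ^ 2 * star z + g12 / 2 * z * (star z) ^ 2
      + g03 / 6 * (star z) ^ 3)
    (hN : ∀ w : ℂ, N w = lam * w + c₁ * w ^ 2 * star w) :
    ∃ h30 h12 h03 : ℂ, ∃ φ : ℂ → ℂ,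
      (∀ w : ℂ, φ w = w + h20 / 2 * w ^ 2 + h11 * w * star w + h02 / 2 * (star w) ^ 2
        + h30 / 6 * w ^ 3 + h12 / 2 * w * (star w) ^ 2 + h03 / 6 * (star w) ^ 3) ∧
      ∃ C > 0, ∀ w : ℂ, ‖w‖ ≤ 1 →
        ‖(1 + h20 * w + h11 * star w + h30 / 2 * w ^ 2 + h12 / 2 * (star w) ^ 2) * N w
            + (h11 * w + h02 * star w + h12 * w * star w + h03 / 2 * (star w) ^ 2) * star (N w)
            - G (φ w)‖
          ≤ C * ‖w‖ ^ 4 := by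
  have him : lam.im = ω := by simp [hlam]
  have ne_zero_of_im : ∀ z : ℂ, z.im ≠ 0 → z ≠ 0 := fun z hz h => hz (by simp [h])
  obtain ⟨hl, hl', hl2, hl2', hl3⟩ : lam ≠ 0 ∧ star lam ≠ 0 ∧ 2 * lam - star lam ≠ 0 ∧
      2 * star lam - lam ≠ 0 ∧ 3 * star lam - lam ≠ 0 := by
    refine ⟨?_, ?_, ?_, ?_, ?_⟩ <;> refine ne_zero_of_im _ ?_ <;> simp [him] <;> linarith
  set h30 := (g30 + 3 * g20 * h20 + 3 * g11 * star h02) / (2 * lam)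
  set h12 :=
    (g12 + g20 * h02 + g11 * star h20 + 2 * g11 * h11 + 2 * g02 * star h11) / (2 * star lam)
  set h03 := (g03 + 3 * g11 * h02 + 3 * g02 * star h20) / (3 * star lam - lam)
  have hres := isBigO_normalForm_residual (G := G) (g21 := g21) (h30 := h30) (h12 := h12)
    (h03 := h03)
    (fun z => by rw [hG]; simp only [quadForm, cubicForm]; ring) hN
    (by rw [hh20, mul_div_cancel₀ _ hl]) (by rw [hh11, mul_div_cancel₀ _ hl'])
    (by rw [hh02, mul_div_cancel₀ _ hl2']) (mul_div_cancel₀ _ (mul_ne_zero two_ne_zero hl))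
    (mul_div_cancel₀ _ (mul_ne_zero two_ne_zero hl')) (mul_div_cancel₀ _ hl3)
    (by rw [hc₁, two_mul_bautin_eq hl hl2, hh20, hh11, hh02])
  obtain ⟨C, hC, hCw⟩ := hres.exists_pos
  refine ⟨h30, h12, h03, fun w => w + (quadForm h20 h11 h02 w + cubicForm h30 0 h12 h03 w),
    fun w => ?_, C, hC, fun w hw => ?_⟩
  · simp only [quadForm, cubicForm]; ring
  · simpa using isBigOWith_principal.1 hCw w (mem_closedBall_zero_iff.2 hw)
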